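/- arXiv:2506.16689 — 3 statements merged into one kernel-verified Lean document; each statement's English description precedes it below -/
import Mathlib

section
/- Let x_min < x_max and λ_min < λ_max be real numbers. Suppose f₁, f₂ ∈ L²(x_min, x_max) satisfy ∫_{x_min}^{x_max} e^{i x λ} f₁(x) dx = ∫_{x_min}^{x_max} e^{i x λ} f₂(x) dx for every λ ∈ [λ_min, λ_max]. Then f₁(x) = f₂(x) for almost every x ∈ [x_min, x_max]. -/
open MeasureTheory Complex Metric
open scoped ContDiff

lemma aux_integrable (a b : ℝ) (g : ℝ → ℂ)
    (hg : Integrable g (volume.restrict (Set.Ioo a b)))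
    (φ : ℝ → ℂ) (hφ : Continuous φ) (C : ℝ) (hC : ∀ x ∈ Set.Ioo a b, ‖φ x‖ ≤ C) :
    Integrable (fun x => φ x * g x) (volume.restrict (Set.Ioo a b)) := by
  refine (hg.norm.const_mul C).mono' (hφ.aestronglyMeasurable.mul hg.1) ?_
  filter_upwards [ae_restrict_mem measurableSet_Ioo] with x hx
  rw [norm_mul]
  exact mul_le_mul_of_nonneg_right (hC x hx) (norm_nonneg _)

lemma aux_norm_kernel (n : ℕ) (x : ℝ) (z : ℂ) :
    ‖(Complex.I * x) ^ n * Complex.exp (Complex.I * x * z)‖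
      = |x| ^ n * Real.exp (-(x * z.im)) := by
  rw [norm_mul, norm_pow, norm_mul, Complex.norm_I, Complex.norm_real, Real.norm_eq_abs,
    Complex.norm_exp, one_mul]
  congr 1
  simp [Complex.mul_re, Complex.mul_im]

lemma aux_hasDerivAt (a b : ℝ) (g : ℝ → ℂ)
    (hg : Integrable g (volume.restrict (Set.Ioo a b))) (n : ℕ) (z : ℂ) :
    HasDerivAt
      (fun w => ∫ x in Set.Ioo a b, (Complex.I * x) ^ n * Complex.exp (Complex.I * x * w) * g x)
      (∫ x in Set.Ioo a b, (Complex.I * x) ^ (n + 1) * Complex.exp (Complex.I * x * z) * g x)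
      z := by
  set M : ℝ := max |a| |b| with hM
  have hM0 : 0 ≤ M := le_max_of_le_left (abs_nonneg a)
  have hxM : ∀ x ∈ Set.Ioo a b, |x| ≤ M := by
    intro x hx
    rw [abs_le]
    constructor
    · linarith [neg_abs_le a, le_max_left |a| |b|, hx.1]
    · linarith [le_abs_self b, le_max_right |a| |b|, hx.2]
  have hker : ∀ (m : ℕ) (w : ℂ), ∀ x ∈ Set.Ioo a b, ‖w - z‖ < 1 →
      ‖(Complex.I * x) ^ m * Complex.exp (Complex.I * x * w)‖
        ≤ M ^ m * Real.exp (M * (‖z‖ + 1)) := by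
    intro m w x hx hw
    rw [aux_norm_kernel]
    have h1 : |x| ^ m ≤ M ^ m := pow_le_pow_left₀ (abs_nonneg x) (hxM x hx) m
    have h2 : Real.exp (-(x * w.im)) ≤ Real.exp (M * (‖z‖ + 1)) := by
      apply Real.exp_le_exp.mpr
      have : |(-(x * w.im))| ≤ M * (‖z‖ + 1) := by
        rw [abs_neg, abs_mul]
        apply mul_le_mul (hxM x hx) ?_ (abs_nonneg _) hM0
        calc |w.im| ≤ ‖w‖ := Complex.abs_im_le_norm w
          _ ≤ ‖z‖ + ‖w - z‖ := by
              have := norm_sub_norm_le w z; linarith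
          _ ≤ ‖z‖ + 1 := by linarith
      linarith [le_abs_self (-(x * w.im))]
    exact mul_le_mul h1 h2 (Real.exp_pos _).le (pow_nonneg hM0 m)
  have hbound : ∀ᵐ (x : ℝ) ∂(volume.restrict (Set.Ioo a b)), ∀ w ∈ ball z 1,
      ‖(Complex.I * x) ^ (n + 1) * Complex.exp (Complex.I * x * w) * g x‖
        ≤ (M ^ (n + 1) * Real.exp (M * (‖z‖ + 1))) * ‖g x‖ := by
    filter_upwards [ae_restrict_mem measurableSet_Ioo] with x hx
    intro w hw
    rw [norm_mul]
    exact mul_le_mul_of_nonneg_right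
      (hker (n + 1) w x hx (by simpa [dist_eq_norm] using hw)) (norm_nonneg _)
  have hdiff : ∀ᵐ (x : ℝ) ∂(volume.restrict (Set.Ioo a b)), ∀ w ∈ ball z 1,
      HasDerivAt (fun w => (Complex.I * x) ^ n * Complex.exp (Complex.I * x * w) * g x)
        ((Complex.I * x) ^ (n + 1) * Complex.exp (Complex.I * x * w) * g x) w := by
    filter_upwards with x
    intro w hw
    have h1 : HasDerivAt (fun w => Complex.exp (Complex.I * x * w))
        (Complex.exp (Complex.I * x * w) * (Complex.I * x)) w := by
      simpa using ((hasDerivAt_id w).const_mul (Complex.I * x)).cexp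
    have h2 := (h1.const_mul ((Complex.I * x) ^ n)).mul_const (g x)
    refine h2.congr_deriv ?_
    ring
  have hmeas' : AEStronglyMeasurable
      (fun x : ℝ => (Complex.I * x) ^ (n + 1) * Complex.exp (Complex.I * x * z) * g x)
      (volume.restrict (Set.Ioo a b)) := by
    exact ((by fun_prop : Continuous fun x : ℝ =>
      (Complex.I * x) ^ (n + 1) * Complex.exp (Complex.I * x * z))).aestronglyMeasurable.mul hg.1
  exact (hasDerivAt_integral_of_dominated_loc_of_deriv_le
    (F := fun w x => (Complex.I * x) ^ n * Complex.exp (Complex.I * x * w) * g x)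
    (F' := fun w x => (Complex.I * x) ^ (n + 1) * Complex.exp (Complex.I * x * w) * g x)
    (x₀ := z) (s := ball z 1)
    (bound := fun x => (M ^ (n + 1) * Real.exp (M * (‖z‖ + 1))) * ‖g x‖)
    (ball_mem_nhds z one_pos)
    (Filter.Eventually.of_forall fun w =>
      (((by fun_prop : Continuous fun x : ℝ =>
        (Complex.I * x) ^ n * Complex.exp (Complex.I * x * w))).aestronglyMeasurable).mul hg.1)
    (aux_integrable a b g hg _ (by fun_prop) (M ^ n * Real.exp (M * (‖z‖ + 1)))
      (fun x hx => hker n z x hx (by simp)))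
    hmeas' hbound ((hg.norm.const_mul _)) hdiff).2

/-- **Uniqueness of the limited Fourier transform.**
If `f₁, f₂ ∈ L²(xmin, xmax)` have the same limited Fourier transform
`∫_{xmin}^{xmax} e^{i x λ} f(x) dx` for every `λ ∈ [λmin, λmax]`,
then `f₁ = f₂` almost everywhere on `[xmin, xmax]`. -/
theorem limited_fourier_uniqueness
    (xmin xmax lammin lammax : ℝ) (hx : xmin < xmax) (hlam : lammin < lammax)
    (f₁ f₂ : ℝ → ℂ)
    (hf₁ : MemLp f₁ 2 (volume.restrict (Set.Ioo xmin xmax)))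
    (hf₂ : MemLp f₂ 2 (volume.restrict (Set.Ioo xmin xmax)))
    (h : ∀ lam ∈ Set.Icc lammin lammax,
      (∫ x in xmin..xmax, Complex.exp (Complex.I * x * lam) * f₁ x) =
      (∫ x in xmin..xmax, Complex.exp (Complex.I * x * lam) * f₂ x)) :
    ∀ᵐ x ∂volume, x ∈ Set.Icc xmin xmax → f₁ x = f₂ x := by
  haveI : IsFiniteMeasure (volume.restrict (Set.Ioo xmin xmax)) := by
    constructor
    rw [Measure.restrict_apply_univ, Real.volume_Ioo]
    exact ENNReal.ofReal_lt_top
  set g : ℝ → ℂ := fun x => f₁ x - f₂ x with hgdef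
  have hg : Integrable g (volume.restrict (Set.Ioo xmin xmax)) :=
    ((hf₁.sub hf₂).integrable (by norm_num))
  have hg1 : Integrable f₁ (volume.restrict (Set.Ioo xmin xmax)) :=
    hf₁.integrable (by norm_num)
  have hg2 : Integrable f₂ (volume.restrict (Set.Ioo xmin xmax)) :=
    hf₂.integrable (by norm_num)
  set G : ℕ → ℂ → ℂ := fun n z =>
    ∫ x in Set.Ioo xmin xmax, (Complex.I * x) ^ n * Complex.exp (Complex.I * x * z) * g x
    with hGdef
  have hder : ∀ n z, HasDerivAt (G n) (G (n + 1) z) z := fun n z =>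
    aux_hasDerivAt xmin xmax g hg n z
  -- the kernel has norm one for real lam
  have hnorm1 : ∀ (lam : ℝ) (x : ℝ), ‖Complex.exp (Complex.I * x * (lam : ℂ))‖ = 1 := by
    intro lam x
    have := aux_norm_kernel 0 x (lam : ℂ)
    simpa using this
  -- G 0 vanishes on the real segment
  have hG0 : ∀ lam ∈ Set.Icc lammin lammax, G 0 ((lam : ℝ) : ℂ) = 0 := by
    intro lam hmem
    have e₁ : Integrable (fun x : ℝ => Complex.exp (Complex.I * x * (lam : ℂ)) * f₁ x)
        (volume.restrict (Set.Ioo xmin xmax)) :=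
      aux_integrable xmin xmax f₁ hg1 _ (by fun_prop) 1 (fun x _ => (hnorm1 lam x).le)
    have e₂ : Integrable (fun x : ℝ => Complex.exp (Complex.I * x * (lam : ℂ)) * f₂ x)
        (volume.restrict (Set.Ioo xmin xmax)) :=
      aux_integrable xmin xmax f₂ hg2 _ (by fun_prop) 1 (fun x _ => (hnorm1 lam x).le)
    have hIoc : ∀ f : ℝ → ℂ, (∫ x in xmin..xmax, Complex.exp (Complex.I * x * lam) * f x)
        = ∫ x in Set.Ioo xmin xmax, Complex.exp (Complex.I * x * lam) * f x := by
      intro f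
      rw [intervalIntegral.integral_of_le hx.le, ← MeasureTheory.integral_Ioc_eq_integral_Ioo]
    have heq := h lam hmem
    rw [hIoc f₁, hIoc f₂] at heq
    have : G 0 ((lam : ℝ) : ℂ)
        = (∫ x in Set.Ioo xmin xmax, Complex.exp (Complex.I * x * lam) * f₁ x)
          - ∫ x in Set.Ioo xmin xmax, Complex.exp (Complex.I * x * lam) * f₂ x := by
      rw [hGdef, ← integral_sub e₁ e₂]
      apply integral_congr_ae
      filter_upwards with x
      simp [hgdef]
      ring
    rw [this, heq, sub_self]
  -- identity theorem: G 0 vanishes everywhere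
  have hG0' : ∀ z, G 0 z = 0 := by
    have hdiff : Differentiable ℂ (G 0) := fun z => (hder 0 z).differentiableAt
    have han : AnalyticOnNhd ℂ (G 0) Set.univ :=
      hdiff.differentiableOn.analyticOnNhd isOpen_univ
    have hfreq : ∃ᶠ z in nhdsWithin ((lammin : ℝ) : ℂ) {((lammin : ℝ) : ℂ)}ᶜ, G 0 z = 0 := by
      set u : ℕ → ℝ := fun k => lammin + (lammax - lammin) / (k + 1) with hu
      have hmem : ∀ k, u k ∈ Set.Icc lammin lammax := by
        intro k
        constructor
        · have : 0 < (lammax - lammin) / (k + 1) :=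
            div_pos (by linarith) (by positivity)
          simp [hu]; linarith
        · have h1 : (lammax - lammin) / (k + 1) ≤ (lammax - lammin) := by
            apply div_le_self (by linarith)
            have : (0:ℝ) < (k:ℝ) + 1 := by positivity
            linarith
          simp [hu]; linarith
      have hne : ∀ k, ((u k : ℝ) : ℂ) ≠ ((lammin : ℝ) : ℂ) := by
        intro k
        have hpos : 0 < (lammax - lammin) / (k + 1) :=
          div_pos (by linarith) (by positivity)
        simp only [ne_eq, Complex.ofReal_inj]
        show ¬ (lammin + (lammax - lammin) / (k + 1) = lammin)
        intro hcon
        linarith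
      have htend : Filter.Tendsto (fun k => ((u k : ℝ) : ℂ)) Filter.atTop
          (nhdsWithin ((lammin : ℝ) : ℂ) {((lammin : ℝ) : ℂ)}ᶜ) := by
        apply tendsto_nhdsWithin_of_tendsto_nhds_of_eventually_within
        · have hreal : Filter.Tendsto u Filter.atTop (nhds lammin) := by
            have : Filter.Tendsto (fun k : ℕ => (lammax - lammin) / (k + 1))
                Filter.atTop (nhds 0) := by
              apply Filter.Tendsto.div_atTop tendsto_const_nhds
              exact Filter.tendsto_atTop_add_const_right _ 1 tendsto_natCast_atTop_atTop
            simpa [hu] using tendsto_const_nhds.add this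
          exact (Complex.continuous_ofReal.continuousAt.tendsto).comp hreal
        · exact Filter.Eventually.of_forall fun k => hne k
      exact htend.frequently (Filter.Frequently.of_forall fun k => hG0 (u k) (hmem k))
    have := han.eqOn_zero_of_preconnected_of_frequently_eq_zero isPreconnected_univ
      (Set.mem_univ _) hfreq
    intro z
    exact this (Set.mem_univ z)
  -- all G n vanish identically
  have hGn : ∀ n, ∀ z, G n z = 0 := by
    intro n
    induction n with
    | zero => exact hG0'
    | succ n ih =>
      intro z
      have h1 : HasDerivAt (G n) (G (n + 1) z) z := hder n z
      have h2 : G n = fun _ => (0 : ℂ) := funext ih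
      rw [h2] at h1
      exact (h1.unique (hasDerivAt_const z 0))
  -- moments vanish
  have hmom : ∀ n : ℕ, (∫ x in Set.Ioo xmin xmax, (x : ℂ) ^ n * g x) = 0 := by
    intro n
    have := hGn n 0
    rw [hGdef] at this
    simp only [mul_zero, Complex.exp_zero, mul_one, mul_pow] at this
    rw [show (fun x : ℝ => Complex.I ^ n * (x : ℂ) ^ n * g x)
        = fun x : ℝ => Complex.I ^ n * ((x : ℂ) ^ n * g x) by funext x; ring,
      integral_const_mul] at this
    rcases mul_eq_zero.mp this with h' | h'
    · exact absurd h' (pow_ne_zero n Complex.I_ne_zero)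
    · exact h'
  -- integrals against polynomials vanish
  have hpoly : ∀ p : Polynomial ℝ,
      (∫ x in Set.Ioo xmin xmax, ((p.eval x : ℝ) : ℂ) * g x) = 0 := by
    intro p
    set M : ℝ := max |xmin| |xmax| with hM
    have hxM : ∀ x ∈ Set.Ioo xmin xmax, |x| ≤ M := by
      intro x hx
      rw [abs_le]
      constructor
      · linarith [neg_abs_le xmin, le_max_left |xmin| |xmax|, hx.1]
      · linarith [le_abs_self xmax, le_max_right |xmin| |xmax|, hx.2]
    have hint : ∀ i : ℕ, Integrable
        (fun x : ℝ => ((p.coeff i : ℝ) : ℂ) * (x : ℂ) ^ i * g x)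
        (volume.restrict (Set.Ioo xmin xmax)) := by
      intro i
      apply aux_integrable xmin xmax g hg _ (by fun_prop) (|p.coeff i| * M ^ i)
      intro x hx
      rw [norm_mul, norm_pow]
      have h1 : ‖((p.coeff i : ℝ) : ℂ)‖ = |p.coeff i| := by
        simp [Complex.norm_real, Real.norm_eq_abs]
      have h2 : ‖((x : ℝ) : ℂ)‖ = |x| := by
        simp [Complex.norm_real, Real.norm_eq_abs]
      rw [h1, h2]
      apply mul_le_mul_of_nonneg_left _ (abs_nonneg _)
      exact pow_le_pow_left₀ (abs_nonneg x) (hxM x hx) i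
    have hev : (fun x : ℝ => ((p.eval x : ℝ) : ℂ) * g x)
        = fun x : ℝ => ∑ i ∈ Finset.range (p.natDegree + 1),
            ((p.coeff i : ℝ) : ℂ) * (x : ℂ) ^ i * g x := by
      funext x
      rw [← Finset.sum_mul]
      congr 1
      rw [Polynomial.eval_eq_sum_range]
      push_cast
      ring_nf
      exact Finset.sum_congr rfl fun i _ => mul_comm _ _
    rw [hev, integral_finset_sum _ (fun i _ => hint i)]
    apply Finset.sum_eq_zero
    intro i _
    rw [show (fun x : ℝ => ((p.coeff i : ℝ) : ℂ) * (x : ℂ) ^ i * g x)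
        = fun x : ℝ => ((p.coeff i : ℝ) : ℂ) * ((x : ℂ) ^ i * g x) by funext x; ring,
      integral_const_mul, hmom i, mul_zero]
  -- integrals against test functions vanish
  set hfun : ℝ → ℂ := (Set.Ioo xmin xmax).indicator g with hhdef
  have hindint : Integrable hfun volume := MeasureTheory.IntegrableOn.integrable_indicator hg measurableSet_Ioo
  have htest : ∀ w : ℝ → ℝ, ContDiff ℝ ∞ w → HasCompactSupport w →
      (∫ x, w x • hfun x) = 0 := by
    intro w hw hwsupp
    have hstep : (∫ x, w x • hfun x)
        = ∫ x in Set.Ioo xmin xmax, ((w x : ℝ) : ℂ) * g x := by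
      rw [show (fun x => w x • hfun x)
          = (Set.Ioo xmin xmax).indicator (fun x => ((w x : ℝ) : ℂ) * g x) by
        funext x
        by_cases hmem : x ∈ Set.Ioo xmin xmax
        · simp [hhdef, Set.indicator_of_mem hmem, Complex.real_smul]
        · simp [hhdef, Set.indicator_of_notMem hmem]]
      exact integral_indicator measurableSet_Ioo
    rw [hstep]
    set S := ∫ x in Set.Ioo xmin xmax, ((w x : ℝ) : ℂ) * g x with hS
    set Ig := ∫ x in Set.Ioo xmin xmax, ‖g x‖ with hIg
    have hIg0 : 0 ≤ Ig := integral_nonneg fun x => norm_nonneg _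
    have hbound : ∀ ε : ℝ, 0 < ε → ‖S‖ ≤ ε * Ig := by
      intro ε hε
      obtain ⟨p, hp⟩ := exists_polynomial_near_of_continuousOn xmin xmax w
        (hw.continuous.continuousOn) ε hε
      have hwint : Integrable (fun x : ℝ => ((w x : ℝ) : ℂ) * g x)
          (volume.restrict (Set.Ioo xmin xmax)) := by
        obtain ⟨C, hC⟩ := hw.continuous.bounded_above_of_compact_support hwsupp
        apply aux_integrable xmin xmax g hg _
          (Complex.continuous_ofReal.comp hw.continuous) C
        intro x _
        simpa [Complex.norm_real, Real.norm_eq_abs] using hC x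
      have hpint : Integrable (fun x : ℝ => ((p.eval x : ℝ) : ℂ) * g x)
          (volume.restrict (Set.Ioo xmin xmax)) := by
        apply aux_integrable xmin xmax g hg _ (by fun_prop)
          (sSup (Set.image (fun x : ℝ => ‖((p.eval x : ℝ) : ℂ)‖) (Set.Icc xmin xmax)))
        intro x hx
        apply le_csSup
        · apply IsCompact.bddAbove
          apply (isCompact_Icc).image
          fun_prop
        · exact ⟨x, Set.mem_Icc_of_Ioo hx, rfl⟩
      have hsub : S = ∫ x in Set.Ioo xmin xmax,
          (((w x - p.eval x : ℝ) : ℂ)) * g x := by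
        have : (fun x : ℝ => (((w x - p.eval x : ℝ) : ℂ)) * g x)
            = fun x : ℝ => ((w x : ℝ) : ℂ) * g x - ((p.eval x : ℝ) : ℂ) * g x := by
          funext x; push_cast; ring
        rw [this, integral_sub hwint hpint, hpoly p, sub_zero]
      rw [hsub]
      have := norm_integral_le_of_norm_le (μ := volume.restrict (Set.Ioo xmin xmax))
        (f := fun x => (((w x - p.eval x : ℝ) : ℂ)) * g x)
        (g := fun x => ε * ‖g x‖) (hg.norm.const_mul ε) ?_
      · calc ‖∫ x in Set.Ioo xmin xmax, (((w x - p.eval x : ℝ) : ℂ)) * g x‖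
            ≤ ∫ x in Set.Ioo xmin xmax, ε * ‖g x‖ := this
          _ = ε * Ig := by rw [hIg, integral_const_mul]
      · filter_upwards [ae_restrict_mem measurableSet_Ioo] with x hx
        rw [norm_mul]
        apply mul_le_mul_of_nonneg_right _ (norm_nonneg _)
        have : ‖(((w x - p.eval x : ℝ)) : ℂ)‖ = |w x - p.eval x| := by
          rw [Complex.norm_real, Real.norm_eq_abs]
        rw [this]
        have := hp x (Set.mem_Icc_of_Ioo hx)
        rw [abs_sub_comm] at this
        exact this.le
    have : ‖S‖ ≤ 0 := by
      apply le_of_forall_pos_le_add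
      intro ε hε
      have h1 := hbound (ε / (Ig + 1)) (by positivity)
      have h2 : (ε / (Ig + 1)) * Ig ≤ ε := by
        rw [div_mul_eq_mul_div, div_le_iff₀ (by linarith)]
        nlinarith
      linarith
    simpa using norm_le_zero_iff.mp this
  have hind : ∀ᵐ x ∂volume, hfun x = 0 :=
    ae_eq_zero_of_integral_contDiff_smul_eq_zero hindint.locallyIntegrable htest
  have hends : ∀ᵐ x ∂(volume : Measure ℝ), x ∉ ({xmin, xmax} : Set ℝ) :=
    measure_eq_zero_iff_ae_notMem.mp
      (((Set.countable_singleton xmax).insert xmin).measure_zero _)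
  filter_upwards [hind, hends] with x hx0 hx1 hmem
  have hxIoo : x ∈ Set.Ioo xmin xmax := by
    constructor
    · exact lt_of_le_of_ne hmem.1 fun hcon => hx1 (by simp [hcon.symm])
    · exact lt_of_le_of_ne hmem.2 fun hcon => hx1 (by simp [hcon])
  rw [hhdef, Set.indicator_of_mem hxIoo] at hx0
  exact sub_eq_zero.mp hx0
end

section
/- Let x_min < x_max be real numbers and let (λ_k) be a sequence of distinct real numbers possessing an accumulation point in ℝ. Suppose f₁, f₂ ∈ L²(x_min, x_max) satisfy ∫_{x_min}^{x_max} e^{i x λ_k} f₁(x) dx = ∫_{x_min}^{x_max} e^{i x λ_k} f₂(x) dx for every k. Then f₁(x) = f₂(x) for almost every x ∈ [x_min, x_max]. -/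
set_option maxHeartbeats 1000000
open MeasureTheory Complex FourierTransform
open scoped ContDiff

noncomputable def ofCompactSupportSchwartz (ψ : ℝ → ℂ) (h1 : ContDiff ℝ ∞ ψ)
    (h2 : HasCompactSupport ψ) : SchwartzMap ℝ ℂ where
  toFun := ψ
  smooth' := h1
  decay' := by
    intro k n
    have hc : Continuous fun x : ℝ => ‖x‖ ^ k * ‖iteratedFDeriv ℝ n ψ x‖ :=
      ((continuous_norm.pow k)).mul (h1.continuous_iteratedFDeriv (mod_cast le_top)).norm
    have hcs : HasCompactSupport fun x : ℝ => ‖x‖ ^ k * ‖iteratedFDeriv ℝ n ψ x‖ :=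
      ((h2.iteratedFDeriv n).norm).mul_left
    obtain ⟨C, hC⟩ := hc.bounded_above_of_compact_support hcs
    exact ⟨C, fun x => (le_abs_self _).trans ((Real.norm_eq_abs _ ▸ hC x))⟩

/-- If an integrable function has identically vanishing Fourier transform, it vanishes a.e. -/
theorem ae_eq_zero_of_fourierIntegral_eq_zero (G : ℝ → ℂ) (hG : Integrable G)
    (h : ∀ w : ℝ, 𝓕 G w = 0) : ∀ᵐ x, G x = 0 := by
  apply ae_eq_zero_of_integral_contDiff_smul_eq_zero hG.locallyIntegrable
  intro ψ hψ hψc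
  have h1 : ContDiff ℝ ∞ fun x : ℝ => (ψ x : ℂ) :=
    Complex.ofRealCLM.contDiff.comp hψ
  have h2 : HasCompactSupport fun x : ℝ => (ψ x : ℂ) :=
    by simpa [Function.comp_def] using hψc.comp_left (g := Complex.ofReal) rfl
  set Ψ : SchwartzMap ℝ ℂ := ofCompactSupportSchwartz _ h1 h2 with hΨ
  set Φ : SchwartzMap ℝ ℂ := (SchwartzMap.fourierTransformCLE ℂ (SchwartzMap ℝ ℂ)).symm Ψ with hΦ
  have hΦΨ : 𝓕 (⇑Φ) = ⇑Ψ := by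
    have := (SchwartzMap.fourierTransformCLE ℂ (SchwartzMap ℝ ℂ)).apply_symm_apply Ψ
    rw [← this]
    rfl
  have key := VectorFourier.integral_fourierIntegral_smul_eq_flip
    (F := ℂ) (L := innerₗ ℝ) (μ := (volume : Measure ℝ)) (ν := (volume : Measure ℝ))
    Real.continuous_fourierChar (by exact continuous_inner) Φ.integrable hG
  have hflip : (innerₗ ℝ).flip = innerₗ ℝ := by
    apply LinearMap.ext; intro v; apply LinearMap.ext; intro w
    simpa using mul_comm v w
  rw [hflip] at key
  have hL : ∀ ξ, VectorFourier.fourierIntegral Real.fourierChar volume (innerₗ ℝ) (⇑Φ) ξ = 𝓕 (⇑Φ) ξ :=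
    fun ξ => rfl
  have hR : ∀ x, VectorFourier.fourierIntegral Real.fourierChar volume (innerₗ ℝ) G x = 𝓕 G x :=
    fun x => rfl
  calc ∫ x, ψ x • G x = ∫ ξ, (𝓕 (⇑Φ)) ξ • G ξ := by
        rw [hΦΨ]
        congr 1
      _ = ∫ x, Φ x • 𝓕 G x := by
        exact key
      _ = 0 := by simp [h]


/-- **Uniqueness of the limited Fourier transform from a sequence of frequencies.**
If `f₁, f₂ ∈ L²(xmin, xmax)` have the same limited Fourier transform at a sequence
of distinct real frequencies `λ_k` possessing an accumulation point in `ℝ`,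
then `f₁ = f₂` almost everywhere on `[xmin, xmax]`. -/
theorem limited_fourier_uniqueness_seq
    (xmin xmax : ℝ) (hx : xmin < xmax)
    (lam : ℕ → ℝ) (hinj : Function.Injective lam)
    (hacc : ∃ a : ℝ, AccPt a (Filter.principal (Set.range lam)))
    (f₁ f₂ : ℝ → ℂ)
    (hf₁ : MemLp f₁ 2 (volume.restrict (Set.Ioo xmin xmax)))
    (hf₂ : MemLp f₂ 2 (volume.restrict (Set.Ioo xmin xmax)))
    (h : ∀ k : ℕ,
      (∫ x in xmin..xmax, Complex.exp (Complex.I * x * lam k) * f₁ x) =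
      (∫ x in xmin..xmax, Complex.exp (Complex.I * x * lam k) * f₂ x)) :
    ∀ᵐ x ∂volume, x ∈ Set.Icc xmin xmax → f₁ x = f₂ x := by
  classical
  set g : ℝ → ℂ := fun x => f₁ x - f₂ x with hgdef
  set μ : Measure ℝ := volume.restrict (Set.Ioo xmin xmax) with hμ
  haveI : IsFiniteMeasure μ := ⟨by
    rw [hμ, Measure.restrict_apply_univ, Real.volume_Ioo]
    exact ENNReal.ofReal_lt_top⟩
  have hf₁i : Integrable f₁ μ :=
    memLp_one_iff_integrable.mp (hf₁.mono_exponent (by norm_num))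
  have hf₂i : Integrable f₂ μ :=
    memLp_one_iff_integrable.mp (hf₂.mono_exponent (by norm_num))
  have hgi : Integrable g μ := hf₁i.sub hf₂i
  set M : ℝ := max |xmin| |xmax| with hM
  have hxM : ∀ x ∈ Set.Ioo xmin xmax, |x| ≤ M := by
    intro x hxx
    rw [abs_le]
    constructor
    · have h1 := neg_abs_le xmin
      have h2 := le_max_left |xmin| |xmax|
      have := hxx.1
      simp only [hM]
      linarith
    · have h1 := le_abs_self xmax
      have h2 := le_max_right |xmin| |xmax|
      have := hxx.2
      simp only [hM]
      linarith
  have hexp : ∀ (z : ℂ) (x : ℝ), ‖Complex.exp (Complex.I * x * z)‖ = Real.exp (-(x * z.im)) := by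
    intro z x
    rw [Complex.norm_exp]
    congr 1
    simp [Complex.mul_re, Complex.mul_im]
  have hInt : ∀ (z : ℂ) (f : ℝ → ℂ), Integrable f μ →
      Integrable (fun x : ℝ => Complex.exp (Complex.I * x * z) * f x) μ := by
    intro z f hf
    apply hf.bdd_mul (c := Real.exp (M * |z.im|))
    · exact (Continuous.aestronglyMeasurable (by fun_prop))
    · filter_upwards [ae_restrict_mem measurableSet_Ioo] with x hxx
      rw [hexp]
      apply Real.exp_le_exp.mpr
      calc -(x * z.im) ≤ |x * z.im| := neg_le_abs _
        _ = |x| * |z.im| := abs_mul _ _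
        _ ≤ M * |z.im| := by
            apply mul_le_mul_of_nonneg_right (hxM x hxx) (abs_nonneg _)
  set F : ℂ → ℂ := fun z => ∫ x, Complex.exp (Complex.I * x * z) * g x ∂μ with hFdef
  have hF : Differentiable ℂ F := by
    intro z₀
    have key := hasDerivAt_integral_of_dominated_loc_of_deriv_le
      (μ := μ) (𝕜 := ℂ)
      (F := fun z x => Complex.exp (Complex.I * x * z) * g x)
      (F' := fun z x => Complex.exp (Complex.I * ↑x * z) * (Complex.I * ↑x) * g x)
      (x₀ := z₀) (bound := fun x => M * Real.exp (M * (|z₀.im| + 1)) * ‖g x‖)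
      (s := Metric.ball z₀ 1) (Metric.ball_mem_nhds z₀ one_pos)
      (Filter.Eventually.of_forall fun z => (hInt z g hgi).aestronglyMeasurable)
      (hInt z₀ g hgi)
      ?_ ?_ ((hgi.norm.const_mul _)) ?_
    · exact key.2.differentiableAt
    · exact (Continuous.aestronglyMeasurable (by fun_prop)).mul hgi.1
    · filter_upwards [ae_restrict_mem measurableSet_Ioo] with x hxx z hz
      rw [norm_mul, norm_mul, hexp]
      have hIx : ‖Complex.I * (x : ℂ)‖ = |x| := by
        simp
      rw [hIx]
      have him : |z.im| ≤ |z₀.im| + 1 := by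
        have h1 : |z.im - z₀.im| ≤ ‖z - z₀‖ := by
          simpa using Complex.abs_im_le_norm (z - z₀)
        have h2 : ‖z - z₀‖ < 1 := by
          simpa [Complex.dist_eq] using Metric.mem_ball.mp hz
        have := abs_sub_abs_le_abs_sub z.im z₀.im
        linarith
      have he : Real.exp (-(x * z.im)) ≤ Real.exp (M * (|z₀.im| + 1)) := by
        apply Real.exp_le_exp.mpr
        calc -(x * z.im) ≤ |x * z.im| := neg_le_abs _
          _ = |x| * |z.im| := abs_mul _ _
          _ ≤ M * (|z₀.im| + 1) := by
              apply mul_le_mul (hxM x hxx) him (abs_nonneg _)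
              exact (abs_nonneg xmin).trans (le_max_left _ _)
      calc Real.exp (-(x * z.im)) * |x| * ‖g x‖
          ≤ Real.exp (M * (|z₀.im| + 1)) * M * ‖g x‖ := by
            apply mul_le_mul_of_nonneg_right _ (norm_nonneg _)
            exact mul_le_mul he (hxM x hxx) (abs_nonneg _) (Real.exp_nonneg _)
        _ = M * Real.exp (M * (|z₀.im| + 1)) * ‖g x‖ := by ring
    · refine Filter.Eventually.of_forall fun x z _ => ?_
      have hd : HasDerivAt (fun z : ℂ => Complex.I * ↑x * z) (Complex.I * ↑x) z := by
        simpa using (hasDerivAt_id z).const_mul (Complex.I * (x : ℂ))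
      exact (hd.cexp).mul_const (g x)
  have hFan : AnalyticOnNhd ℂ F Set.univ := analyticOnNhd_univ_iff_differentiable.mpr hF
  have hFk : ∀ k : ℕ, F ((lam k : ℝ) : ℂ) = 0 := by
    intro k
    have e₁ : ∀ f : ℝ → ℂ, (∫ x in xmin..xmax, Complex.exp (Complex.I * x * lam k) * f x)
        = ∫ x, Complex.exp (Complex.I * x * ((lam k : ℝ) : ℂ)) * f x ∂μ := by
      intro f
      rw [intervalIntegral.integral_of_le hx.le, hμ, ← integral_Ioc_eq_integral_Ioo]
    have : F ((lam k : ℝ) : ℂ)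
        = (∫ x, Complex.exp (Complex.I * x * ((lam k : ℝ) : ℂ)) * f₁ x ∂μ)
          - ∫ x, Complex.exp (Complex.I * x * ((lam k : ℝ) : ℂ)) * f₂ x ∂μ := by
      rw [hFdef]
      simp only [hgdef, mul_sub]
      exact integral_sub (hInt _ f₁ hf₁i) (hInt _ f₂ hf₂i)
    rw [this, ← e₁ f₁, ← e₁ f₂, h k, sub_self]
  obtain ⟨a, ha⟩ := hacc
  rw [accPt_iff_frequently] at ha
  have hfreq0 : ∃ᶠ y : ℝ in nhdsWithin a ({a} : Set ℝ)ᶜ, F ↑y = 0 := by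
    rw [frequently_nhdsWithin_iff]
    apply ha.mono
    rintro y ⟨hya, k, rfl⟩
    exact ⟨hFk k, hya⟩
  have htend : Filter.Tendsto (fun y : ℝ => (y : ℂ)) (nhdsWithin a {a}ᶜ)
      (nhdsWithin (a : ℂ) ({(a : ℂ)} : Set ℂ)ᶜ) := by
    apply ContinuousWithinAt.tendsto_nhdsWithin Complex.continuous_ofReal.continuousWithinAt
    intro y hy
    simp only [Set.mem_compl_iff, Set.mem_singleton_iff] at hy ⊢
    exact fun hc => hy (by exact_mod_cast hc)
  have hfreqC : ∃ᶠ z in nhdsWithin (a : ℂ) ({(a : ℂ)} : Set ℂ)ᶜ, F z = 0 := htend.frequently hfreq0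
  have hF0 : ∀ z, F z = 0 := fun z =>
    hFan.eqOn_zero_of_preconnected_of_frequently_eq_zero isPreconnected_univ
      (Set.mem_univ (a : ℂ)) hfreqC (Set.mem_univ z)
  set G : ℝ → ℂ := (Set.Ioo xmin xmax).indicator g with hGdef
  have hGint : Integrable G volume := by
    have : IntegrableOn g (Set.Ioo xmin xmax) volume := hgi
    exact this.integrable_indicator measurableSet_Ioo
  have hfourG : ∀ w : ℝ, 𝓕 G w = 0 := by
    intro w
    have heq : 𝓕 G w = F (((-2) * Real.pi * w : ℝ) : ℂ) := by
      have hr : F (((-2) * Real.pi * w : ℝ) : ℂ) =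
          ∫ v : ℝ, (Set.Ioo xmin xmax).indicator
            (fun x : ℝ => Complex.exp (Complex.I * x * (((-2) * Real.pi * w : ℝ) : ℂ)) * g x) v := by
        rw [hFdef]
        exact (integral_indicator measurableSet_Ioo).symm
      rw [Real.fourier_real_eq_integral_exp_smul, hr]
      apply integral_congr_ae
      apply Filter.Eventually.of_forall
      intro v
      by_cases hv : v ∈ Set.Ioo xmin xmax
      · simp only [hGdef, Set.indicator_of_mem hv, smul_eq_mul]
        congr 2
        push_cast
        ring
      · simp [hGdef, Set.indicator_of_notMem hv]
    rw [heq, hF0]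
  have haeG : ∀ᵐ x : ℝ, G x = 0 :=
    ae_eq_zero_of_fourierIntegral_eq_zero G hGint hfourG
  have hm1 : ∀ᵐ x : ℝ, x ≠ xmin := by
    have h0 : (volume : Measure ℝ) {xmin} = 0 := Real.volume_singleton
    refine (measure_eq_zero_iff_ae_notMem.mp h0).mono fun x hx => ?_
    simpa using hx
  have hm2 : ∀ᵐ x : ℝ, x ≠ xmax := by
    have h0 : (volume : Measure ℝ) {xmax} = 0 := Real.volume_singleton
    refine (measure_eq_zero_iff_ae_notMem.mp h0).mono fun x hx => ?_
    simpa using hx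
  filter_upwards [haeG, hm1, hm2] with x hGx h1 h2 hmem
  have hio : x ∈ Set.Ioo xmin xmax :=
    ⟨lt_of_le_of_ne hmem.1 (Ne.symm h1), lt_of_le_of_ne hmem.2 h2⟩
  rw [hGdef, Set.indicator_of_mem hio] at hGx
  exact sub_eq_zero.mp hGx
end

section
/- Let x_min < x_max and λ_min < λ_max be real numbers and let f ∈ L¹(x_min, x_max) be a complex-valued integrable function. If ∫_{x_min}^{x_max} e^{i x λ} f(x) dx = 0 for every λ ∈ [λ_min, λ_max], then all moments of f vanish: ∫_{x_min}^{x_max} xⁿ f(x) dx = 0 for every natural number n. -/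
open MeasureTheory

/-- **Vanishing of all moments.** If `f ∈ L¹(xmin, xmax)` has vanishing limited
Fourier transform `∫_{xmin}^{xmax} e^{i x λ} f(x) dx = 0` for every
`λ ∈ [λmin, λmax]`, then all moments of `f` vanish. -/
theorem moments_vanish_of_fourier_vanish
    (xmin xmax lammin lammax : ℝ) (hx : xmin < xmax) (hlam : lammin < lammax)
    (f : ℝ → ℂ)
    (hf : IntegrableOn f (Set.Ioo xmin xmax))
    (h : ∀ lam ∈ Set.Icc lammin lammax,
      (∫ x in xmin..xmax, Complex.exp (Complex.I * x * lam) * f x) = 0) :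
    ∀ n : ℕ, (∫ x in xmin..xmax, (x : ℂ) ^ n * f x) = 0 := by
  set S : Set ℝ := Set.Ioo xmin xmax with hS
  set F : ℕ → ℂ → ℂ := fun n z =>
    ∫ x in S, (Complex.I * x) ^ n * Complex.exp (Complex.I * x * z) * f x with hFdef
  set M : ℝ := max |xmin| |xmax| with hMdef
  have hM0 : (0:ℝ) ≤ M := le_trans (abs_nonneg _) (le_max_left _ _)
  have hxM : ∀ x ∈ S, |x| ≤ M := by
    intro x hx'
    have h1 := hx'.1; have h2 := hx'.2
    have := neg_abs_le xmin; have := le_abs_self xmax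
    have := le_max_left |xmin| |xmax|; have := le_max_right |xmin| |xmax|
    rw [abs_le]; constructor <;> linarith
  -- norm bound for the integrand
  have hnorm : ∀ (n : ℕ) (z : ℂ) (x : ℝ), x ∈ S →
      ‖(Complex.I * x) ^ n * Complex.exp (Complex.I * x * z) * f x‖
        ≤ M ^ n * Real.exp (M * |z.im|) * ‖f x‖ := by
    intro n z x hx'
    have hxm := hxM x hx'
    have hax : ‖(Complex.I * (x:ℂ))‖ = |x| := by
      simp [Complex.norm_def]
    have hre : (Complex.I * x * z).re = -(x * z.im) := by
      simp [Complex.mul_re, Complex.mul_im]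
    have hexp : ‖Complex.exp (Complex.I * x * z)‖ ≤ Real.exp (M * |z.im|) := by
      rw [Complex.norm_exp, hre]
      apply Real.exp_le_exp.2
      calc -(x * z.im) ≤ |x * z.im| := neg_le_abs _
        _ = |x| * |z.im| := abs_mul _ _
        _ ≤ M * |z.im| := by gcongr
    calc ‖(Complex.I * x) ^ n * Complex.exp (Complex.I * x * z) * f x‖
        = ‖(Complex.I * (x:ℂ))‖ ^ n * ‖Complex.exp (Complex.I * x * z)‖ * ‖f x‖ := by
          rw [norm_mul, norm_mul, norm_pow]
      _ ≤ M ^ n * Real.exp (M * |z.im|) * ‖f x‖ := by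
          rw [hax]; gcongr
  have hmeas : ∀ (n : ℕ) (z : ℂ), AEStronglyMeasurable
      (fun x : ℝ => (Complex.I * x) ^ n * Complex.exp (Complex.I * x * z) * f x)
      (volume.restrict S) := by
    intro n z
    have hc : Continuous fun x : ℝ =>
        (Complex.I * x) ^ n * Complex.exp (Complex.I * x * z) := by
      apply Continuous.mul
      · exact (continuous_const.mul Complex.continuous_ofReal).pow n
      · exact Complex.continuous_exp.comp
          ((continuous_const.mul Complex.continuous_ofReal).mul continuous_const)
    exact hc.aestronglyMeasurable.mul hf.1
  have key_int : ∀ (n : ℕ) (z : ℂ), IntegrableOn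
      (fun x : ℝ => (Complex.I * x) ^ n * Complex.exp (Complex.I * x * z) * f x) S := by
    intro n z
    refine Integrable.mono' ((hf.norm.const_mul (M ^ n * Real.exp (M * |z.im|)))) (hmeas n z) ?_
    filter_upwards [ae_restrict_mem measurableSet_Ioo] with x hx'
    exact hnorm n z x hx'
  -- derivative
  have hderiv : ∀ (n : ℕ) (z : ℂ), HasDerivAt (F n) (F (n+1) z) z := by
    intro n z₀
    have key := hasDerivAt_integral_of_dominated_loc_of_deriv_le
      (F := fun z (x : ℝ) => (Complex.I * x) ^ n * Complex.exp (Complex.I * x * z) * f x)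
      (F' := fun z (x : ℝ) => (Complex.I * x) ^ (n+1) * Complex.exp (Complex.I * x * z) * f x)
      (bound := fun x => M ^ (n+1) * Real.exp (M * (|z₀.im| + 1)) * ‖f x‖)
      (μ := volume.restrict S) (x₀ := z₀) (Metric.ball_mem_nhds z₀ zero_lt_one)
      (Filter.Eventually.of_forall fun z => hmeas n z) (key_int n z₀) (hmeas (n+1) z₀)
      ?_ ((hf.norm.const_mul _)) ?_
    · exact key.2
    · -- bound
      filter_upwards [ae_restrict_mem measurableSet_Ioo] with x hx' z hz
      have him : |z.im| ≤ |z₀.im| + 1 := by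
        have h1 : |z.im - z₀.im| ≤ dist z z₀ := by
          have := Complex.abs_im_le_norm (z - z₀)
          simpa [Complex.dist_eq, Complex.sub_im] using this
        have h2 : dist z z₀ < 1 := Metric.mem_ball.mp hz
        have h3 := abs_sub_abs_le_abs_sub z.im z₀.im
        linarith
      calc ‖(Complex.I * x) ^ (n+1) * Complex.exp (Complex.I * x * z) * f x‖
          ≤ M ^ (n+1) * Real.exp (M * |z.im|) * ‖f x‖ := hnorm (n+1) z x hx'
        _ ≤ M ^ (n+1) * Real.exp (M * (|z₀.im| + 1)) * ‖f x‖ := by gcongr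
    · -- differentiability
      filter_upwards [ae_restrict_mem measurableSet_Ioo] with x _ z _
      have h1 : HasDerivAt (fun z : ℂ => Complex.I * x * z) (Complex.I * x) z := by
        simpa using (hasDerivAt_id z).const_mul (Complex.I * (x:ℂ))
      have h2 := (h1.cexp.const_mul ((Complex.I * (x:ℂ)) ^ n)).mul_const (f x)
      exact h2.congr_deriv (by ring)
  have hdiff : ∀ n, Differentiable ℂ (F n) := fun n z => (hderiv n z).differentiableAt
  have hanal : ∀ n, AnalyticOnNhd ℂ (F n) Set.univ := fun n =>
    (hdiff n).differentiableOn.analyticOnNhd isOpen_univ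
  -- F 0 vanishes on the segment
  have hzero : ∀ lam ∈ Set.Icc lammin lammax, F 0 (lam : ℂ) = 0 := by
    intro lam hl
    have h0 := h lam hl
    rw [intervalIntegral.integral_of_le hx.le, integral_Ioc_eq_integral_Ioo] at h0
    have : F 0 (lam : ℂ) = ∫ x in S, Complex.exp (Complex.I * x * lam) * f x := by
      rw [hFdef]; simp only [pow_zero, one_mul]
    rw [this]; exact h0
  -- identity theorem: F 0 ≡ 0
  have hF0 : ∀ z, F 0 z = 0 := by
    set e : ℝ := lammax - lammin with he
    have he0 : 0 < e := by simp [he]; linarith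
    set u : ℕ → ℂ := fun n => ((lammin + e / (n + 1) : ℝ) : ℂ) with hu
    have htend : Filter.Tendsto u Filter.atTop (nhdsWithin (↑lammin) {(↑lammin : ℂ)}ᶜ) := by
      apply tendsto_nhdsWithin_of_tendsto_nhds_of_eventually_within
      · have hr : Filter.Tendsto (fun n : ℕ => lammin + e * (1 / (n + 1)))
            Filter.atTop (nhds (lammin + e * 0)) :=
          tendsto_const_nhds.add (tendsto_const_nhds.mul tendsto_one_div_add_atTop_nhds_zero_nat)
        have : Filter.Tendsto (fun n : ℕ => lammin + e / (n + 1)) Filter.atTop (nhds lammin) := by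
          simpa [mul_one_div, div_eq_mul_inv] using hr
        exact (Complex.continuous_ofReal.tendsto lammin).comp this
      · apply Filter.Eventually.of_forall
        intro n
        simp only [u, Set.mem_compl_iff, Set.mem_singleton_iff]
        intro hcon
        have : lammin + e / (n + 1) = lammin := by exact_mod_cast hcon
        have hp : 0 < e / (n + 1 : ℝ) := by positivity
        linarith
    have hfreq : ∃ᶠ z in nhdsWithin (↑lammin) {(↑lammin : ℂ)}ᶜ, F 0 z = 0 := by
      apply htend.frequently
      apply Filter.Frequently.of_forall
      intro n
      apply hzero
      constructor
      · have : 0 < e / (n + 1 : ℝ) := by positivity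
        linarith
      · have h1 : e / (n + 1 : ℝ) ≤ e := by
          apply div_le_self he0.le
          have : (0:ℝ) ≤ (n:ℝ) := Nat.cast_nonneg n
          linarith
        simp [he] at h1 ⊢; linarith
    have := (hanal 0).eqOn_zero_of_preconnected_of_frequently_eq_zero
      isPreconnected_univ (Set.mem_univ (↑lammin : ℂ)) hfreq
    intro z; exact this (Set.mem_univ z)
  -- induction: all F n ≡ 0
  have hFn : ∀ n z, F n z = 0 := by
    intro n
    induction n with
    | zero => exact hF0
    | succ n ih =>
      intro z
      have h1 := hderiv n z
      have h2 : HasDerivAt (F n) 0 z := by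
        have hfun : F n = fun _ => (0:ℂ) := funext ih
        rw [hfun]; exact hasDerivAt_const z 0
      exact h1.unique h2
  -- conclude
  intro n
  have h0 := hFn n 0
  have hFn0 : F n 0 = Complex.I ^ n * ∫ x in S, (x:ℂ) ^ n * f x := by
    rw [hFdef]
    simp only [mul_zero, Complex.exp_zero, mul_one, mul_pow, mul_assoc]
    exact integral_const_mul _ _
  rw [hFn0] at h0
  have hI : (Complex.I : ℂ) ^ n ≠ 0 := pow_ne_zero n Complex.I_ne_zero
  have hint : (∫ x in S, (x:ℂ) ^ n * f x) = 0 := by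
    rcases mul_eq_zero.1 h0 with h' | h'
    · exact absurd h' hI
    · exact h'
  rw [intervalIntegral.integral_of_le hx.le, integral_Ioc_eq_integral_Ioo]
  exact hint
end
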